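/- Let F = ⟨St_A, St_B, O, ρ⟩ be a finite game form and α : O∖E → [0,1] a partial valuation of the outcomes. In the three-state reachability game C_{(F,α)}, the initial state q₀ is maximizable (and hence all states are) if and only if F is reach-maximizable with respect to α. -/

import Mathlib

open scoped BigOperators Classical

noncomputable section

/-- A probability distribution on a finite type. -/
def FDist (X : Type) [Fintype X] : Type :=
  { p : X → ℝ // (∀ x, 0 ≤ p x) ∧ ∑ x, p x = 1 }

namespace CRG

variable {A B Q D : Type} [Fintype A] [Fintype B] [Fintype Q] [Fintype D]

/-- The support of a distribution. -/
def supp {X : Type} [Fintype X] (σ : FDist X) : Set X := { x | σ.1 x ≠ 0 }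

/-- The Dirac distribution. -/
def dirac {X : Type} [Fintype X] [DecidableEq X] (x : X) : FDist X :=
  ⟨fun y => if y = x then 1 else 0, by
    constructor
    · intro y
      dsimp only
      split <;> norm_num
    · simp⟩

/-- Outcome of a pair of mixed strategies in the game in normal form with payoff `u`. -/
def out (u : A → B → ℝ) (σA : FDist A) (σB : FDist B) : ℝ :=
  ∑ a, ∑ b, σA.1 a * σB.1 b * u a b

/-- Outcome of a mixed strategy of Player A against a pure action of Player B. -/
def outB (u : A → B → ℝ) (σA : FDist A) (b : B) : ℝ :=
  ∑ a, σA.1 a * u a b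

/-- The value of a Player A mixed strategy in a game in normal form. -/
def valStratGF (u : A → B → ℝ) (σA : FDist A) : ℝ :=
  ⨅ σB : FDist B, out u σA σB

/-- The (von Neumann) value of a finite game in normal form. -/
def valGF (u : A → B → ℝ) : ℝ :=
  ⨆ σA : FDist A, valStratGF u σA

/-- The optimal Player A mixed strategies in a game in normal form. -/
def OptA (u : A → B → ℝ) : Set (FDist A) := { σA | valStratGF u σA = valGF u }

/-- The optimal actions of Player B against the Player A mixed strategy `σA`. -/
def optActs (u : A → B → ℝ) (σA : FDist A) : Set B :=
  { b | outB u σA b = valStratGF u σA }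

/-- μ_v : the lift of a valuation of the states to the Nature states. -/
def lift (dist : D → FDist Q) (v : Q → ℝ) (d : D) : ℝ := ∑ q, (dist d).1 q * v q

/-- The payoff function of the local interaction `F_q` valued by `μ_m`. -/
def locPay (δ : Q → A → B → D) (dist : D → FDist Q) (m : Q → ℝ) (q : Q) : A → B → ℝ :=
  fun a b => lift dist m (δ q a b)

/-- One-step transition probability between states. -/
def step (δ : Q → A → B → D) (dist : D → FDist Q) (σA : FDist A) (σB : FDist B)
    (q q' : Q) : ℝ :=
  ∑ a, ∑ b, σA.1 a * σB.1 b * (dist (δ q a b)).1 q'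

/-- The operator Δ on valuations of the states. -/
def Δop (δ : Q → A → B → D) (dist : D → FDist Q) (T : Q) (v : Q → ℝ) : Q → ℝ :=
  fun q => if q = T then 1 else valGF (fun a b => lift dist v (δ q a b))

/-- The target `T` is an absorbing (self-looping) sink. -/
def Absorbing (δ : Q → A → B → D) (dist : D → FDist Q) (T : Q) : Prop :=
  ∀ a b, (dist (δ T a b)).1 = fun q => if q = T then 1 else 0

/-- `m` is the least fixed point of Δ on `[0,1]^Q`. -/
def IsLfpDelta (δ : Q → A → B → D) (dist : D → FDist Q) (T : Q) (m : Q → ℝ) : Prop :=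
  (∀ q, m q ∈ Set.Icc (0:ℝ) 1) ∧ Δop δ dist T m = m ∧
    ∀ v : Q → ℝ, (∀ q, v q ∈ Set.Icc (0:ℝ) 1) → Δop δ dist T v = v → ∀ q, m q ≤ v q

/-- A strategy: a history of past states together with the current state gives a
mixed action.  (This encodes maps `Q⁺ → 𝒟(X)`.) -/
def Strat (Q X : Type) [Fintype X] : Type := List Q → Q → FDist X

/-- Residual strategy after the history `π` has been played. -/
def residual {X : Type} [Fintype X] (s : Strat Q X) (π : List Q) : Strat Q X :=
  fun h q => s (π ++ h) q

/-- The (positional) strategy associated with a per-state choice of mixed actions. -/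
def ofPos {X : Type} [Fintype X] (s : Q → FDist X) : Strat Q X := fun _ q => s q

/-- Probability of reaching the set `S` within `n` steps from current state `q`,
history `h` having been played. -/
def reachSetNAux (δ : Q → A → B → D) (dist : D → FDist Q) (S : Set Q) :
    ℕ → Strat Q A → Strat Q B → List Q → Q → ℝ
  | 0, _, _, _, q => if q ∈ S then 1 else 0
  | n + 1, sA, sB, h, q =>
      if q ∈ S then 1
      else ∑ q', step δ dist (sA h q) (sB h q) q q' *
        reachSetNAux δ dist S n sA sB (h ++ [q]) q'

/-- Probability of reaching the set `S` within `n` steps from state `q`. -/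
def reachSetN (δ : Q → A → B → D) (dist : D → FDist Q) (S : Set Q) (n : ℕ)
    (sA : Strat Q A) (sB : Strat Q B) (q : Q) : ℝ :=
  reachSetNAux δ dist S n sA sB [] q

/-- Probability of reaching the target `T` within `n` steps from state `q`. -/
def reachN (δ : Q → A → B → D) (dist : D → FDist Q) (T : Q) (n : ℕ)
    (sA : Strat Q A) (sB : Strat Q B) (q : Q) : ℝ :=
  reachSetN δ dist {T} n sA sB q

/-- Probability of eventually reaching the target `T` from state `q`. -/
def reach (δ : Q → A → B → D) (dist : D → FDist Q) (T : Q)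
    (sA : Strat Q A) (sB : Strat Q B) (q : Q) : ℝ :=
  ⨆ n : ℕ, reachN δ dist T n sA sB q

/-- The value of a Player A strategy from state `q`. -/
def valA (δ : Q → A → B → D) (dist : D → FDist Q) (T : Q) (sA : Strat Q A) (q : Q) : ℝ :=
  ⨅ sB : Strat Q B, reach δ dist T sA sB q

/-- The value of the game from state `q`. -/
def value (δ : Q → A → B → D) (dist : D → FDist Q) (T : Q) (q : Q) : ℝ :=
  ⨆ sA : Strat Q A, valA δ dist T sA q

/-- A state is maximizable when Player A has an optimal strategy from it. -/
def Maximizable (δ : Q → A → B → D) (dist : D → FDist Q) (T q : Q) : Prop :=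
  ∃ sA : Strat Q A, valA δ dist T sA q = value δ dist T q

/-- A positional Player A strategy locally dominates the valuation `v`. -/
def LocallyDominates (δ : Q → A → B → D) (dist : D → FDist Q)
    (sA : Q → FDist A) (v : Q → ℝ) : Prop :=
  ∀ q, v q ≤ valStratGF (fun a b => lift dist v (δ q a b)) (sA q)

/-- Transition function ι of the MDP induced by a positional Player A strategy. -/
def stepB [DecidableEq B] (δ : Q → A → B → D) (dist : D → FDist Q)
    (sA : Q → FDist A) (q : Q) (b : B) (q' : Q) : ℝ :=
  step δ dist (sA q) (dirac b) q q'

/-- An end component of the MDP induced by the positional Player A strategy `sA`. -/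
structure EndComp [DecidableEq B] (δ : Q → A → B → D) (dist : D → FDist Q)
    (sA : Q → FDist A) where
  states : Set Q
  acts : Q → Set B
  acts_nonempty : ∀ q ∈ states, (acts q).Nonempty
  closed : ∀ q ∈ states, ∀ b ∈ acts q, ∀ q', stepB δ dist sA q b q' ≠ 0 → q' ∈ states
  connected : ∀ q ∈ states, ∀ q' ∈ states,
    Relation.ReflTransGen
      (fun x y => x ∈ states ∧ ∃ b ∈ acts x, stepB δ dist sA x b y ≠ 0) q q'

/-- `S_D` : the Nature states having a non-zero probability to reach `S`. -/
def natS (dist : D → FDist Q) (S : Set Q) : Set D :=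
  { d | ∃ q ∈ S, (dist d).1 q ≠ 0 }

/-- Progressive optimal local strategies at `q` w.r.t. the set `Gd`. -/
def Prog (δ : Q → A → B → D) (dist : D → FDist Q) (m : Q → ℝ) (q : Q)
    (Gd : Set Q) : Set (FDist A) :=
  { σA | σA ∈ OptA (locPay δ dist m q) ∧
      ∀ b ∈ optActs (locPay δ dist m q) σA, ∃ a ∈ supp σA, δ q a b ∈ natS dist Gd }

/-- Risky optimal local strategies at `q` w.r.t. the set `Bd`. -/
def Risk (δ : Q → A → B → D) (dist : D → FDist Q) (m : Q → ℝ) (q : Q)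
    (Bd : Set Q) : Set (FDist A) :=
  { σA | σA ∈ OptA (locPay δ dist m q) ∧
      ∃ b ∈ optActs (locPay δ dist m q) σA, ∃ a ∈ supp σA, δ q a b ∈ natS dist Bd }

/-- Efficient local strategies: progressive and not risky. -/
def Eff (δ : Q → A → B → D) (dist : D → FDist Q) (m : Q → ℝ) (q : Q)
    (Gd Bd : Set Q) : Set (FDist A) :=
  Prog δ dist m q Gd \ Risk δ dist m q Bd

/-- The increasing sequence of sets of secure states w.r.t. `Bd`. -/
def SecN (δ : Q → A → B → D) (dist : D → FDist Q) (m : Q → ℝ) (T : Q) (Bd : Set Q) :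
    ℕ → Set Q
  | 0 => {T}
  | n + 1 => SecN δ dist m T Bd n ∪
      { q | q ∉ Bd ∧ (Eff δ dist m q (SecN δ dist m T Bd n) Bd).Nonempty }

/-- The set of secure states w.r.t. `Bd`. -/
def Sec (δ : Q → A → B → D) (dist : D → FDist Q) (m : Q → ℝ) (T : Q) (Bd : Set Q) :
    Set Q :=
  (⋃ n : ℕ, SecN δ dist m T Bd n) ∪ { q | m q = 0 }

/-- The sequence of sets of bad states. -/
def BadN (δ : Q → A → B → D) (dist : D → FDist Q) (m : Q → ℝ) (T : Q) : ℕ → Set Q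
  | 0 => ∅
  | n + 1 => (Sec δ dist m T (BadN δ dist m T n))ᶜ

/-- The set of bad states. -/
def Bad (δ : Q → A → B → D) (dist : D → FDist Q) (m : Q → ℝ) (T : Q) : Set Q :=
  BadN δ dist m T (Fintype.card Q)

/-- `α[y]` : the total valuation extending the partial valuation `α : O∖E → [0,1]`
with the value `y` on `E`. -/
def extendVal {O : Type} (E : Set O) (α : O → ℝ) (y : ℝ) : O → ℝ :=
  fun o => if o ∈ E then y else α o

/-- The map `f_α : y ↦ val_{⟨F, α[y]⟩}`. -/
def fval {O : Type} (ρ : A → B → O) (E : Set O) (α : O → ℝ) (y : ℝ) : ℝ :=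
  valGF (fun a b => extendVal E α y (ρ a b))

/-- `v` is the least fixed point of `f_α` on `[0,1]`. -/
def IsLfpVal {O : Type} (ρ : A → B → O) (E : Set O) (α : O → ℝ) (v : ℝ) : Prop :=
  v ∈ Set.Icc (0:ℝ) 1 ∧ fval ρ E α v = v ∧
    ∀ y ∈ Set.Icc (0:ℝ) 1, fval ρ E α y = y → v ≤ y

/-- The game form `ρ` is reach-maximizable w.r.t. the partial valuation `α : O∖E → [0,1]`. -/
def RMwrt {O : Type} (ρ : A → B → O) (E : Set O) (α : O → ℝ) : Prop :=
  ∀ v : ℝ, IsLfpVal ρ E α v →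
    v = 0 ∨
      ∃ σA ∈ OptA (fun a b => extendVal E α v (ρ a b)),
        ∀ b ∈ optActs (fun a b => extendVal E α v (ρ a b)) σA,
          ∃ a ∈ supp σA, ρ a b ∉ E

/-- A reach-maximizable game form: RM w.r.t. every partial valuation of its outcomes. -/
def RMform {O : Type} (ρ : A → B → O) : Prop :=
  ∀ (E : Set O) (α : O → ℝ), (∀ o ∉ E, α o ∈ Set.Icc (0:ℝ) 1) → RMwrt ρ E α

/-- A determined game form. -/
def Determined {O : Type} (ρ : A → B → O) : Prop :=
  ∀ E : Set O, (∃ a, ∀ b, ρ a b ∈ E) ∨ (∃ b, ∀ a, ρ a b ∉ E)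

/-- Transition function of the three-state reachability game `C_{(F,α)}`:
state `0` is `q₀`, state `1` is the target `⊤`, state `2` is the bin `⊥`. -/
def triδ {O : Type} (ρ : A → B → O) (E : Set O) :
    Fin 3 → A → B → (Fin 3 ⊕ {o : O // o ∉ E}) :=
  fun s a b =>
    if s = 0 then
      if h : ρ a b ∈ E then Sum.inl 0 else Sum.inr ⟨ρ a b, h⟩
    else Sum.inl s

/-- Nature distributions of the three-state reachability game `C_{(F,α)}`. -/
def triDist {O : Type} (E : Set O) (α : O → ℝ)
    (hα : ∀ o ∉ E, α o ∈ Set.Icc (0:ℝ) 1) :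
    (Fin 3 ⊕ {o : O // o ∉ E}) → FDist (Fin 3) := fun d =>
  match d with
  | Sum.inl t => dirac t
  | Sum.inr x =>
      ⟨![0, α x.1, 1 - α x.1], by
        obtain ⟨h0, h1⟩ := hα x.1 x.2
        constructor
        · intro s
          fin_cases s <;> simp <;> linarith
        · simp [Fin.sum_univ_three]⟩

/-- An abstract (finite) game form with actions `A` and `B`. -/
structure GameForm (A B : Type) where
  O : Type
  fin : Fintype O
  ρ : A → B → O

/-- All local interactions of the arena `δ` belong to the set `𝒢` of game forms
(up to a renaming of the outcomes into Nature states). -/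
def UsesForms {Q D : Type} (𝒢 : Set (GameForm A B)) (δ : Q → A → B → D) : Prop :=
  ∀ q, ∃ F ∈ 𝒢, ∃ g : F.O → D, δ q = fun a b => g (F.ρ a b)

/-- The sequence of iterates of Δ starting from the valuation `1_{⊤}`. -/
def vseq (δ : Q → A → B → D) (dist : D → FDist Q) (T : Q) : ℕ → Q → ℝ
  | 0 => fun q => if q = T then 1 else 0
  | n + 1 => Δop δ dist T (vseq δ dist T n)

/-- Relevant paths w.r.t. the strategy `sA` from the state `q₀`: the pair `(h, q)`
encodes the path `h · q` (history `h`, current state `q`). -/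
inductive Relevant [DecidableEq B] (δ : Q → A → B → D) (dist : D → FDist Q)
    (m : Q → ℝ) (sA : Strat Q A) (q₀ : Q) : List Q → Q → Prop
  | base : Relevant δ dist m sA q₀ [] q₀
  | step {h : List Q} {q q' : Q} :
      Relevant δ dist m sA q₀ h q →
      (∃ b ∈ optActs (locPay δ dist m q) (sA h q),
        0 < CRG.step δ dist (sA h q) (dirac b) q q') →
      Relevant δ dist m sA q₀ (h ++ [q]) q'

end CRG

/-!
Write `V` for the value of `q₀`. One round at `q₀` under `(a, b)` reaches `⊤` with probability
`winProb` and stays at `q₀` with probability `loopProb`, and `α[y] = winProb + y · loopProb`.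
Hence `V` is a fixed point of `f_α` (play well in the first round, then near-optimally), and a
Player B who best-responds in `α[y]` at every round keeps Player A below any fixed point `y`:
`V = v_α`.

If `F` is RM w.r.t. `α` with witness `σ`, then for `y < V` the strategy `σ` gains a fixed amount
`c > 0` over `y` in `α[y]` against every answer (an optimal answer lets the play leave `q₀` with
positive probability, any other answer costs Player B a fixed amount), so playing `σ` forever
reaches `⊤` with probability at least `y`. Conversely, an optimal strategy of Player A must play
an optimal strategy of `α̂` at every round; if Player B can always answer with an action that
keeps the play in `E`, the play never leaves `q₀`, and Player A gets `0 < V`.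
-/

namespace FDist

variable {X : Type} [Fintype X]

lemma nonneg (σ : FDist X) (x : X) : 0 ≤ σ.1 x := σ.2.1 x

lemma sum_eq_one (σ : FDist X) : ∑ x, σ.1 x = 1 := σ.2.2

lemma le_sum_mul (σ : FDist X) {f : X → ℝ} {m : ℝ} (h : ∀ x, m ≤ f x) :
    m ≤ ∑ x, σ.1 x * f x :=
  calc m = ∑ x, σ.1 x * m := by rw [← Finset.sum_mul, σ.sum_eq_one, one_mul]
    _ ≤ _ := Finset.sum_le_sum fun x _ => mul_le_mul_of_nonneg_left (h x) (σ.nonneg x)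

lemma sum_mul_le (σ : FDist X) {f : X → ℝ} {M : ℝ} (h : ∀ x, f x ≤ M) :
    ∑ x, σ.1 x * f x ≤ M :=
  calc ∑ x, σ.1 x * f x ≤ ∑ x, σ.1 x * M :=
        Finset.sum_le_sum fun x _ => mul_le_mul_of_nonneg_left (h x) (σ.nonneg x)
    _ = M := by rw [← Finset.sum_mul, σ.sum_eq_one, one_mul]

instance [Nonempty X] : Nonempty (FDist X) := ⟨CRG.dirac (Classical.arbitrary X)⟩

end FDist

namespace CRG

section Strategies

variable {Q X : Type} [Fintype X]

instance [Nonempty X] : Nonempty (Strat Q X) := ⟨fun _ _ => Classical.arbitrary _⟩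

def consStrat (x : FDist X) (s : Strat Q X) : Strat Q X :=
  fun h q => match h with
  | [] => x
  | _ :: t => s t q

lemma consStrat_nil (x : FDist X) (s : Strat Q X) (q : Q) : consStrat x s [] q = x := rfl

lemma residual_consStrat (x : FDist X) (s : Strat Q X) (q : Q) :
    residual (consStrat x s) [q] = s := rfl

lemma residual_ofPos (s : Q → FDist X) (π : List Q) : residual (ofPos s) π = ofPos s := rfl

lemma ofPos_apply (s : Q → FDist X) (h : List Q) (q : Q) : ofPos s h q = s q := rfl

variable {Y : Type} [Fintype Y]

def pureResponse (q₀ : Q) (f : FDist X → Y) (s : Strat Q X) : Strat Q Y :=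
  fun h _ => dirac (f (s h q₀))

lemma residual_pureResponse (q₀ : Q) (f : FDist X → Y) (s : Strat Q X) (π : List Q) :
    residual (pureResponse q₀ f s) π = pureResponse q₀ f (residual s π) := rfl

lemma pureResponse_nil (q₀ : Q) (f : FDist X → Y) (s : Strat Q X) (q : Q) :
    pureResponse q₀ f s [] q = dirac (f (s [] q₀)) := rfl

end Strategies

variable {A B : Type} [Fintype A]

section NormalForm

variable [Fintype B] (u : A → B → ℝ)

lemma out_dirac (σ : FDist A) (b : B) : out u σ (dirac b) = outB u σ b := by
  refine Finset.sum_congr rfl fun a _ => ?_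
  rw [Finset.sum_eq_single b (fun b' _ hb' => by simp [dirac, hb']) (by simp)]
  simp [dirac]

lemma out_eq_sum_outB (σ : FDist A) (τ : FDist B) :
    out u σ τ = ∑ b, τ.1 b * outB u σ b := by
  simp only [out, outB, Finset.mul_sum]
  rw [Finset.sum_comm]
  exact Finset.sum_congr rfl fun b _ => Finset.sum_congr rfl fun a _ => by ring

lemma out_nonneg (hu : ∀ a b, 0 ≤ u a b) (σ : FDist A) (τ : FDist B) : 0 ≤ out u σ τ := by
  rw [out_eq_sum_outB]
  exact τ.le_sum_mul fun b => σ.le_sum_mul fun a => hu a b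

lemma out_le_one (hu : ∀ a b, u a b ≤ 1) (σ : FDist A) (τ : FDist B) : out u σ τ ≤ 1 := by
  rw [out_eq_sum_outB]
  exact τ.sum_mul_le fun b => σ.sum_mul_le fun a => hu a b

lemma IsLfpVal.unique {O : Type} {ρ : A → B → O} {E : Set O} {α : O → ℝ} {v v' : ℝ}
    (h : IsLfpVal ρ E α v) (h' : IsLfpVal ρ E α v') : v = v' :=
  le_antisymm (h.2.2 v' h'.1 h'.2.1) (h'.2.2 v h.1 h.2.1)

variable [Nonempty B]

lemma inf'_outB_le_out (σ : FDist A) (τ : FDist B) :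
    Finset.univ.inf' Finset.univ_nonempty (outB u σ) ≤ out u σ τ := by
  rw [out_eq_sum_outB]
  exact τ.le_sum_mul fun b => Finset.inf'_le _ (Finset.mem_univ b)

lemma valStratGF_eq_inf' (σ : FDist A) :
    valStratGF u σ = Finset.univ.inf' Finset.univ_nonempty (outB u σ) := by
  obtain ⟨b, -, hb⟩ := Finset.exists_mem_eq_inf' Finset.univ_nonempty (outB u σ)
  refine le_antisymm ?_ (le_ciInf (inf'_outB_le_out u σ))
  rw [hb, ← out_dirac]
  exact ciInf_le ⟨_, Set.forall_mem_range.2 (inf'_outB_le_out u σ)⟩ (dirac b)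

lemma valStratGF_le_out (σ : FDist A) (τ : FDist B) : valStratGF u σ ≤ out u σ τ :=
  (valStratGF_eq_inf' u σ).trans_le (inf'_outB_le_out u σ τ)

lemma valStratGF_le_outB (σ : FDist A) (b : B) : valStratGF u σ ≤ outB u σ b :=
  out_dirac u σ b ▸ valStratGF_le_out u σ (dirac b)

lemma lt_valStratGF_iff (σ : FDist A) {y : ℝ} : y < valStratGF u σ ↔ ∀ b, y < outB u σ b := by
  simp [valStratGF_eq_inf', Finset.lt_inf'_iff]

lemma exists_mem_optActs (σ : FDist A) : ∃ b, b ∈ optActs u σ := by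
  obtain ⟨b, -, hb⟩ := Finset.exists_mem_eq_inf' Finset.univ_nonempty (outB u σ)
  exact ⟨b, by rw [optActs, Set.mem_ofPred_eq, valStratGF_eq_inf', hb]⟩

lemma valStratGF_le_valGF (σ : FDist A) : valStratGF u σ ≤ valGF u := by
  let b : B := Classical.arbitrary B
  obtain ⟨M, hM⟩ := (Set.finite_range (u · b)).bddAbove
  refine le_ciSup ⟨M, ?_⟩ σ
  rintro _ ⟨σ', rfl⟩
  exact (valStratGF_le_outB u σ' b).trans (σ'.sum_mul_le fun a => hM ⟨a, rfl⟩)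

end NormalForm

section Reachability

variable [Fintype B] {Q D : Type} [Fintype Q] (δ : Q → A → B → D) (dist : D → FDist Q)

lemma step_nonneg (σ : FDist A) (τ : FDist B) (q q' : Q) : 0 ≤ step δ dist σ τ q q' :=
  Finset.sum_nonneg fun a _ => Finset.sum_nonneg fun b _ =>
    mul_nonneg (mul_nonneg (σ.nonneg a) (τ.nonneg b)) ((dist _).nonneg q')

lemma sum_step (σ : FDist A) (τ : FDist B) (q : Q) : ∑ q', step δ dist σ τ q q' = 1 := by
  calc ∑ q', step δ dist σ τ q q'
      = ∑ a, σ.1 a * ∑ b, τ.1 b * ∑ q', (dist (δ q a b)).1 q' := by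
        simp only [step, Finset.mul_sum]
        rw [Finset.sum_comm]
        refine Finset.sum_congr rfl fun a _ => ?_
        rw [Finset.sum_comm]
        exact Finset.sum_congr rfl fun b _ => Finset.sum_congr rfl fun q' _ => by ring
    _ = 1 := by simp [FDist.sum_eq_one]

variable (S : Set Q)

lemma reachSetNAux_append (π : List Q) (N : ℕ) :
    ∀ sA sB h q, reachSetNAux δ dist S N sA sB (π ++ h) q
      = reachSetNAux δ dist S N (residual sA π) (residual sB π) h q := by
  induction N with
  | zero => intro sA sB h q; rfl
  | succ N ih =>
    intro sA sB h q
    unfold reachSetNAux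
    split
    · rfl
    · refine Finset.sum_congr rfl fun q' _ => ?_
      rw [List.append_assoc, ih]
      rfl

lemma reachSetNAux_of_mem {q : Q} (hq : q ∈ S) (N : ℕ) (sA : Strat Q A) (sB : Strat Q B)
    (h : List Q) : reachSetNAux δ dist S N sA sB h q = 1 := by
  cases N <;> simp [reachSetNAux, hq]

lemma reachSetNAux_eq_zero_of_absorbing {q : Q} (hq : q ∉ S)
    (habs : ∀ σ τ q', q' ≠ q → step δ dist σ τ q q' = 0) (N : ℕ) :
    ∀ sA sB h, reachSetNAux δ dist S N sA sB h q = 0 := by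
  induction N with
  | zero => intro sA sB h; simp [reachSetNAux, hq]
  | succ N ih =>
    intro sA sB h
    simp only [reachSetNAux, hq, if_false]
    refine Finset.sum_eq_zero fun q' _ => ?_
    by_cases hq' : q' = q
    · rw [hq', ih, mul_zero]
    · rw [habs _ _ q' hq', zero_mul]

lemma reachSetNAux_mem_Icc (N : ℕ) :
    ∀ sA sB h q, reachSetNAux δ dist S N sA sB h q ∈ Set.Icc (0 : ℝ) 1 := by
  induction N with
  | zero => intro sA sB h q; unfold reachSetNAux; split <;> norm_num
  | succ N ih =>
    intro sA sB h q
    unfold reachSetNAux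
    split
    · norm_num
    refine ⟨Finset.sum_nonneg fun q' _ =>
      mul_nonneg (step_nonneg δ dist _ _ _ _) (ih _ _ _ _).1, ?_⟩
    calc _ ≤ ∑ q', step δ dist (sA h q) (sB h q) q q' :=
          Finset.sum_le_sum fun q' _ =>
            mul_le_of_le_one_right (step_nonneg δ dist _ _ _ _) (ih _ _ _ _).2
      _ = 1 := sum_step δ dist _ _ q

lemma reachSetNAux_le_succ (N : ℕ) :
    ∀ sA sB h q, reachSetNAux δ dist S N sA sB h q ≤ reachSetNAux δ dist S (N + 1) sA sB h q := by
  induction N with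
  | zero =>
    intro sA sB h q
    unfold reachSetNAux
    split
    · rfl
    · exact Finset.sum_nonneg fun q' _ =>
        mul_nonneg (step_nonneg δ dist _ _ _ _) (reachSetNAux_mem_Icc δ dist S _ _ _ _ _).1
  | succ N ih =>
    intro sA sB h q
    unfold reachSetNAux
    split
    · rfl
    · exact Finset.sum_le_sum fun q' _ =>
        mul_le_mul_of_nonneg_left (ih _ _ _ _) (step_nonneg δ dist _ _ _ _)

variable (T : Q) (sA : Strat Q A) (sB : Strat Q B) (q : Q)

lemma reachN_mem_Icc (N : ℕ) : reachN δ dist T N sA sB q ∈ Set.Icc (0 : ℝ) 1 :=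
  reachSetNAux_mem_Icc δ dist {T} N sA sB [] q

lemma tendsto_reachN :
    Filter.Tendsto (fun N => reachN δ dist T N sA sB q) Filter.atTop
      (nhds (reach δ dist T sA sB q)) :=
  tendsto_atTop_ciSup
    (monotone_nat_of_le_succ fun N => reachSetNAux_le_succ δ dist {T} N sA sB [] q)
    ⟨1, Set.forall_mem_range.2 fun N => (reachN_mem_Icc δ dist T sA sB q N).2⟩

lemma reachN_le_reach (N : ℕ) : reachN δ dist T N sA sB q ≤ reach δ dist T sA sB q :=
  le_ciSup ⟨1, Set.forall_mem_range.2 fun N => (reachN_mem_Icc δ dist T sA sB q N).2⟩ N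

lemma reach_mem_Icc : reach δ dist T sA sB q ∈ Set.Icc (0 : ℝ) 1 :=
  ⟨(reachN_mem_Icc δ dist T sA sB q 0).1.trans (reachN_le_reach δ dist T sA sB q 0),
    ciSup_le fun N => (reachN_mem_Icc δ dist T sA sB q N).2⟩

lemma valA_le_reach : valA δ dist T sA q ≤ reach δ dist T sA sB q :=
  ciInf_le ⟨0, Set.forall_mem_range.2 fun sB => (reach_mem_Icc δ dist T sA sB q).1⟩ sB

variable [Nonempty B]

lemma valA_mem_Icc : valA δ dist T sA q ∈ Set.Icc (0 : ℝ) 1 :=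
  ⟨le_ciInf fun sB => (reach_mem_Icc δ dist T sA sB q).1,
    (valA_le_reach δ dist T sA (Classical.arbitrary _) q).trans (reach_mem_Icc δ dist T sA _ q).2⟩

lemma valA_le_value : valA δ dist T sA q ≤ value δ dist T q :=
  le_ciSup ⟨1, Set.forall_mem_range.2 fun sA => (valA_mem_Icc δ dist T sA q).2⟩ sA

lemma value_mem_Icc [Nonempty A] : value δ dist T q ∈ Set.Icc (0 : ℝ) 1 :=
  ⟨(valA_mem_Icc δ dist T (Classical.arbitrary _) q).1.trans (valA_le_value δ dist T _ q),
    ciSup_le fun sA => (valA_mem_Icc δ dist T sA q).2⟩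

end Reachability

section ThreeStateGame

variable {O : Type}

def winProb (ρ : A → B → O) (E : Set O) (α : O → ℝ) : A → B → ℝ :=
  fun a b => if ρ a b ∈ E then 0 else α (ρ a b)

def loopProb (ρ : A → B → O) (E : Set O) : A → B → ℝ :=
  fun a b => if ρ a b ∈ E then 1 else 0

variable (ρ : A → B → O) (E : Set O) (α : O → ℝ)

-- `α[y]` is the one-shot game `⟨F, α[y]⟩`; below, the subscript `₀` marks quantities of
-- `C_{(F,α)}` taken at `q₀ = 0` with target `⊤ = 1`.
local notation "α[" y "]" => fun a b => extendVal E α y (ρ a b)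

lemma outB_of_trapped {σ : FDist A} {b : B} (htr : ∀ a ∈ supp σ, ρ a b ∈ E) :
    outB (winProb ρ E α) σ b = 0 ∧ outB (loopProb ρ E) σ b = 1 := by
  have hσ : ∀ a, σ.1 a ≠ 0 → ρ a b ∈ E := htr
  constructor
  · refine Finset.sum_eq_zero fun a _ => ?_
    by_cases ha : σ.1 a = 0
    · rw [ha, zero_mul]
    · simp [winProb, hσ a ha]
  · refine (Finset.sum_congr rfl fun a _ => ?_).trans σ.sum_eq_one
    by_cases ha : σ.1 a = 0
    · rw [ha, zero_mul]
    · simp [loopProb, hσ a ha]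

lemma outB_loopProb_lt_one {σ : FDist A} {b : B} (hesc : ∃ a ∈ supp σ, ρ a b ∉ E) :
    outB (loopProb ρ E) σ b < 1 := by
  obtain ⟨a₀, ha₀, hE⟩ := hesc
  have hpos : 0 < σ.1 a₀ := lt_of_le_of_ne (σ.nonneg a₀) (Ne.symm ha₀)
  have : σ.1 a₀ ≤ ∑ a, σ.1 a * (1 - loopProb ρ E a b) :=
    calc σ.1 a₀ = σ.1 a₀ * (1 - loopProb ρ E a₀ b) := by simp [loopProb, hE]
      _ ≤ _ := Finset.single_le_sum (f := fun a => σ.1 a * (1 - loopProb ρ E a b))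
          (fun a _ => mul_nonneg (σ.nonneg a) (by unfold loopProb; split_ifs <;> norm_num))
          (Finset.mem_univ a₀)
  simp only [mul_one_sub, Finset.sum_sub_distrib, σ.sum_eq_one] at this
  unfold outB
  linarith

variable [Fintype B]

lemma out_extendVal (y : ℝ) (σ : FDist A) (τ : FDist B) :
    out α[y] σ τ = out (winProb ρ E α) σ τ + y * out (loopProb ρ E) σ τ := by
  simp only [out, Finset.mul_sum, ← Finset.sum_add_distrib]
  refine Finset.sum_congr rfl fun a _ => Finset.sum_congr rfl fun b _ => ?_
  simp only [extendVal, winProb, loopProb]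
  split_ifs <;> ring

lemma outB_extendVal (y : ℝ) (σ : FDist A) (b : B) :
    outB α[y] σ b = outB (winProb ρ E α) σ b + y * outB (loopProb ρ E) σ b := by
  simp only [← out_dirac, out_extendVal]

lemma out_loopProb_mem_Icc (σ : FDist A) (τ : FDist B) :
    out (loopProb ρ E) σ τ ∈ Set.Icc (0 : ℝ) 1 :=
  ⟨out_nonneg _ (fun a b => by unfold loopProb; split_ifs <;> norm_num) σ τ,
    out_le_one _ (fun a b => by unfold loopProb; split_ifs <;> norm_num) σ τ⟩

variable (hα : ∀ o ∉ E, α o ∈ Set.Icc (0:ℝ) 1)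

local notation "reachN₀ " N:max sA:max sB:max => reachN (triδ ρ E) (triDist E α hα) 1 N sA sB 0
local notation "reach₀ " sA:max sB:max => reach (triδ ρ E) (triDist E α hα) 1 sA sB 0
local notation "valA₀ " sA:max => valA (triδ ρ E) (triDist E α hα) 1 sA 0
local notation "val₀" => value (triδ ρ E) (triDist E α hα) 1 0

lemma step_triδ_zero_one (σ : FDist A) (τ : FDist B) :
    step (triδ ρ E) (triDist E α hα) σ τ 0 1 = out (winProb ρ E α) σ τ := by
  refine Finset.sum_congr rfl fun a _ => Finset.sum_congr rfl fun b _ => ?_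
  by_cases h : ρ a b ∈ E <;> simp [triδ, triDist, winProb, h, dirac]

lemma step_triδ_zero_zero (σ : FDist A) (τ : FDist B) :
    step (triδ ρ E) (triDist E α hα) σ τ 0 0 = out (loopProb ρ E) σ τ := by
  refine Finset.sum_congr rfl fun a _ => Finset.sum_congr rfl fun b _ => ?_
  by_cases h : ρ a b ∈ E <;> simp [triδ, triDist, loopProb, h, dirac]

lemma step_triδ_two (σ : FDist A) (τ : FDist B) (q : Fin 3) (hq : q ≠ 2) :
    step (triδ ρ E) (triDist E α hα) σ τ 2 q = 0 :=
  Finset.sum_eq_zero fun a _ => Finset.sum_eq_zero fun b _ => by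
    simp [triδ, triDist, dirac, hq]

lemma reachN_triδ_zero (sA : Strat (Fin 3) A) (sB : Strat (Fin 3) B) : reachN₀ 0 sA sB = 0 := by
  simp [reachN, reachSetN, reachSetNAux]

lemma reachN_triδ_succ (N : ℕ) (sA : Strat (Fin 3) A) (sB : Strat (Fin 3) B) :
    reachN₀ (N + 1) sA sB = out (winProb ρ E α) (sA [] 0) (sB [] 0)
      + out (loopProb ρ E) (sA [] 0) (sB [] 0) * reachN₀ N (residual sA [0]) (residual sB [0]) := by
  have hshift : ∀ q, reachSetNAux (triδ ρ E) (triDist E α hα) {1} N sA sB [0] q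
      = reachSetNAux (triδ ρ E) (triDist E α hα) {1} N (residual sA [0]) (residual sB [0]) [] q :=
    reachSetNAux_append _ _ _ [0] N sA sB []
  have hbin := reachSetNAux_eq_zero_of_absorbing (triδ ρ E) (triDist E α hα) {1}
    (q := 2) (by decide) (step_triδ_two ρ E α hα) N sA sB [0]
  unfold reachN reachSetN
  rw [reachSetNAux, if_neg (by decide), Fin.sum_univ_three, List.nil_append, hbin,
    reachSetNAux_of_mem _ _ _ (Set.mem_singleton 1), hshift, step_triδ_zero_zero,
    step_triδ_zero_one]
  ring

lemma reach_triδ (sA : Strat (Fin 3) A) (sB : Strat (Fin 3) B) :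
    reach₀ sA sB = out (winProb ρ E α) (sA [] 0) (sB [] 0)
      + out (loopProb ρ E) (sA [] 0) (sB [] 0) * reach₀ (residual sA [0]) (residual sB [0]) := by
  refine tendsto_nhds_unique ((tendsto_reachN _ _ 1 sA sB 0).comp
    (Filter.tendsto_add_atTop_nat 1)) ?_
  simp only [Function.comp_def, reachN_triδ_succ]
  exact ((tendsto_reachN _ _ 1 _ _ 0).const_mul _).const_add _

variable [Nonempty B]

lemma valA_le_out_add (sA : Strat (Fin 3) A) (τ : FDist B) :
    valA₀ sA ≤ out (winProb ρ E α) (sA [] 0) τ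
      + out (loopProb ρ E) (sA [] 0) τ * valA₀ (residual sA [0]) := by
  have hinf : out (loopProb ρ E) (sA [] 0) τ * valA₀ (residual sA [0])
      = ⨅ sB, out (loopProb ρ E) (sA [] 0) τ * reach₀ (residual sA [0]) sB :=
    Real.mul_iInf_of_nonneg (out_loopProb_mem_Icc ρ E _ _).1 _
  rw [← sub_le_iff_le_add', hinf]
  refine le_ciInf fun sB => sub_le_iff_le_add'.2 ?_
  have := valA_le_reach (triδ ρ E) (triDist E α hα) 1 sA (consStrat τ sB) 0
  rwa [reach_triδ, consStrat_nil, residual_consStrat] at this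

lemma valStratGF_le_valA_consStrat (σ : FDist A) (sA : Strat (Fin 3) A) :
    valStratGF α[valA₀ sA] σ ≤ valA₀ (consStrat σ sA) := by
  refine le_ciInf fun sB => ?_
  rw [reach_triδ, consStrat_nil, residual_consStrat]
  calc _ ≤ out α[valA₀ sA] σ (sB [] 0) := valStratGF_le_out _ σ _
    _ = out (winProb ρ E α) σ (sB [] 0) + out (loopProb ρ E) σ (sB [] 0) * valA₀ sA := by
        rw [out_extendVal, mul_comm]
    _ ≤ _ := by
        gcongr
        · exact (out_loopProb_mem_Icc ρ E _ _).1
        · exact valA_le_reach _ _ 1 sA _ 0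

lemma valA_le_valStratGF_value (sA : Strat (Fin 3) A) :
    valA₀ sA ≤ valStratGF α[val₀] (sA [] 0) := by
  refine le_ciInf fun τ => (valA_le_out_add ρ E α hα sA τ).trans ?_
  rw [out_extendVal, mul_comm _ (out _ _ _)]
  gcongr
  · exact (out_loopProb_mem_Icc ρ E _ _).1
  · exact valA_le_value _ _ 1 _ 0

lemma valStratGF_extendVal_le_add (σ : FDist A) {y y' : ℝ} (hy : y ≤ y') :
    valStratGF α[y'] σ ≤ valStratGF α[y] σ + (y' - y) := by
  rw [← sub_le_iff_le_add]
  refine le_ciInf fun τ => ?_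
  have hl := out_loopProb_mem_Icc ρ E σ τ
  have := valStratGF_le_out α[y'] σ τ
  rw [out_extendVal] at this ⊢
  nlinarith [mul_le_mul_of_nonneg_left hl.2 (sub_nonneg.2 hy)]

-- A Player B who best-responds in `α[y]` at every round keeps every finite-horizon
-- reachability probability below the prefixed point `y`.
lemma value_le_of_fval_le [Nonempty A] {y : ℝ} (hy0 : 0 ≤ y) (hy : fval ρ E α y ≤ y) :
    val₀ ≤ y := by
  choose f hf using exists_mem_optActs α[y]
  have hreach : ∀ N sA, reachN₀ N sA (pureResponse 0 f sA) ≤ y := by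
    intro N
    induction N with
    | zero => intro sA; rw [reachN_triδ_zero]; exact hy0
    | succ N ih =>
      intro sA
      rw [reachN_triδ_succ, residual_pureResponse, pureResponse_nil]
      have hl := (out_loopProb_mem_Icc ρ E (sA [] 0) (dirac (f (sA [] 0)))).1
      have hbr : out (winProb ρ E α) (sA [] 0) (dirac (f (sA [] 0)))
          + out (loopProb ρ E) (sA [] 0) (dirac (f (sA [] 0))) * y ≤ y :=
        calc _ = outB α[y] (sA [] 0) (f (sA [] 0)) := by
              rw [← out_dirac, out_extendVal, mul_comm y]
          _ = valStratGF α[y] (sA [] 0) := hf _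
          _ ≤ y := (valStratGF_le_valGF _ _).trans hy
      have := mul_le_mul_of_nonneg_left (ih (residual sA [0])) hl
      linarith
  refine ciSup_le fun sA => (valA_le_reach _ _ 1 sA (pureResponse 0 f sA) 0).trans ?_
  exact ciSup_le fun N => hreach N sA

lemma lt_valStratGF_of_escapes {σ : FDist A} {v y : ℝ} (hσ : valStratGF α[v] σ = v)
    (hesc : ∀ b ∈ optActs α[v] σ, ∃ a ∈ supp σ, ρ a b ∉ E) (hy : y < v) :
    y < valStratGF α[y] σ := by
  refine (lt_valStratGF_iff _ σ).2 fun b => ?_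
  have hl := out_loopProb_mem_Icc ρ E σ (dirac b)
  have hv := valStratGF_le_outB α[v] σ b
  rw [out_dirac] at hl
  rw [hσ, outB_extendVal] at hv
  rw [outB_extendVal]
  by_cases hopt : b ∈ optActs α[v] σ
  · have hopt' : outB (winProb ρ E α) σ b + v * outB (loopProb ρ E) σ b = v := by
      rw [← outB_extendVal]; exact hopt.trans hσ
    have := outB_loopProb_lt_one ρ E (hesc b hopt)
    nlinarith
  · have hlt : v < outB (winProb ρ E α) σ b + v * outB (loopProb ρ E) σ b := by
      refine lt_of_le_of_ne hv fun h => hopt ?_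
      rw [optActs, Set.mem_ofPred_eq, hσ, outB_extendVal, ← h]
    nlinarith [hl.2]

-- With `c := valStratGF α[y] σ - y > 0`, one more round turns a lower bound `m ≤ y` into
-- `w + l m ≥ (w + l y) - (y - m) ≥ m + c`, so `N` rounds give at least `min y (N c)`.
lemma le_valA_ofPos {σ : FDist A} {y : ℝ} (hy : y < valStratGF α[y] σ) :
    y ≤ valA₀ (ofPos fun _ => σ) := by
  set c := valStratGF α[y] σ - y
  have hc : 0 < c := sub_pos.2 hy
  have hreach : ∀ (N : ℕ) sB, min y (N * c) ≤ reachN₀ N (ofPos fun _ => σ) sB := by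
    intro N
    induction N with
    | zero => intro sB; rw [reachN_triδ_zero]; simp
    | succ N ih =>
      intro sB
      rw [reachN_triδ_succ, residual_ofPos, ofPos_apply]
      have hl := out_loopProb_mem_Icc ρ E σ (sB [] 0)
      have hgain :
          y + c ≤ out (winProb ρ E α) σ (sB [] 0) + out (loopProb ρ E) σ (sB [] 0) * y := by
        have := valStratGF_le_out α[y] σ (sB [] 0)
        rw [out_extendVal] at this
        linarith
      have hm : min y (N * c) ≤ y := min_le_left _ _
      have hmin : min y ((N + 1 : ℕ) * c) ≤ min y (N * c) + c := by
        rw [← min_add_add_right]; push_cast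
        exact min_le_min (by linarith) (by linarith)
      nlinarith [ih (residual sB [0]), mul_le_mul_of_nonneg_left (ih (residual sB [0])) hl.1,
        mul_le_mul_of_nonneg_right hl.2 (sub_nonneg.2 hm)]
  obtain ⟨N, hN⟩ := exists_nat_ge (y / c)
  refine le_ciInf fun sB => ?_
  calc y = min y (N * c) := (min_eq_left ((div_le_iff₀ hc).1 hN)).symm
    _ ≤ _ := hreach N sB
    _ ≤ _ := reachN_le_reach _ _ 1 _ sB 0 N

variable [Nonempty A]

lemma fval_value : fval ρ E α val₀ = val₀ := by
  refine le_antisymm (ciSup_le fun σ => le_of_forall_pos_lt_add fun ε hε => ?_)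
    (ciSup_le fun sA => (valA_le_valStratGF_value ρ E α hα sA).trans (valStratGF_le_valGF _ _))
  obtain ⟨sA, hsA⟩ := exists_lt_of_lt_ciSup (show val₀ - ε < val₀ by linarith)
  calc valStratGF α[val₀] σ ≤ valStratGF α[valA₀ sA] σ + (val₀ - valA₀ sA) :=
        valStratGF_extendVal_le_add ρ E α σ (valA_le_value _ _ 1 sA 0)
    _ ≤ valA₀ (consStrat σ sA) + (val₀ - valA₀ sA) := by
        gcongr; exact valStratGF_le_valA_consStrat ρ E α hα σ sA
    _ < val₀ + ε := by linarith [valA_le_value (triδ ρ E) (triDist E α hα) 1 (consStrat σ sA) 0]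

lemma isLfpVal_value : IsLfpVal ρ E α val₀ :=
  ⟨value_mem_Icc _ _ 1 0, fval_value ρ E α hα,
    fun _ hy hfy => value_le_of_fval_le ρ E α hα hy.1 hfy.le⟩

lemma mem_OptA_of_valA_eq_value {sA : Strat (Fin 3) A} (hsA : valA₀ sA = val₀) :
    sA [] 0 ∈ OptA α[val₀] := by
  refine le_antisymm (valStratGF_le_valGF _ _) ?_
  calc valGF α[val₀] = valA₀ sA := (fval_value ρ E α hα).trans hsA.symm
    _ ≤ _ := valA_le_valStratGF_value ρ E α hα sA

-- Player B traps every optimal first move; an optimal strategy of Player A must then stay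
-- optimal forever, so the play loops at `q₀` and never reaches `⊤`.
lemma valA_lt_value_of_trapped (hV : 0 < val₀)
    (htrap : ∀ σ ∈ OptA α[val₀], ∃ b, ∀ a ∈ supp σ, ρ a b ∈ E) (sA : Strat (Fin 3) A) :
    valA₀ sA < val₀ := by
  choose! f hf using htrap
  have hstuck : ∀ N sA, valA₀ sA = val₀ → reachN₀ N sA (pureResponse 0 f sA) = 0 := by
    intro N
    induction N with
    | zero => intro sA _; exact reachN_triδ_zero ρ E α hα _ _
    | succ N ih =>
      intro sA hsA
      obtain ⟨hw, hl⟩ := outB_of_trapped ρ E α (hf _ (mem_OptA_of_valA_eq_value ρ E α hα hsA))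
      have hstep := valA_le_out_add ρ E α hα sA (dirac (f (sA [] 0)))
      rw [out_dirac, out_dirac, hw, hl, zero_add, one_mul, hsA] at hstep
      rw [reachN_triδ_succ, residual_pureResponse, pureResponse_nil, out_dirac, out_dirac, hw, hl,
        zero_add, one_mul]
      exact ih _ (le_antisymm (valA_le_value _ _ 1 _ 0) hstep)
  by_contra hge
  have hsA := le_antisymm (valA_le_value _ _ 1 sA 0) (not_lt.1 hge)
  have := (valA_le_reach _ _ 1 sA (pureResponse 0 f sA) 0).trans
    (ciSup_le fun N => (hstuck N sA hsA).le)
  linarith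

end ThreeStateGame

end CRG

theorem stmt8_general
    {A B O : Type} [Fintype A] [Fintype B]
    [Nonempty A] [Nonempty B]
    (ρ : A → B → O) (E : Set O) (α : O → ℝ)
    (hα : ∀ o ∉ E, α o ∈ Set.Icc (0:ℝ) 1) :
    CRG.Maximizable (CRG.triδ ρ E) (CRG.triDist E α hα) 1 0 ↔ CRG.RMwrt ρ E α := by
  open CRG in
  have hV := isLfpVal_value ρ E α hα
  set V := value (triδ ρ E) (triDist E α hα) 1 0
  have hRM : RMwrt ρ E α ↔ V = 0 ∨ ∃ σ ∈ OptA (fun a b => extendVal E α V (ρ a b)),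
      ∀ b ∈ optActs (fun a b => extendVal E α V (ρ a b)) σ, ∃ a ∈ supp σ, ρ a b ∉ E :=
    ⟨fun h => h V hV, fun h v hv => hV.unique hv ▸ h⟩
  rw [hRM]
  constructor
  · rintro ⟨sA, hsA⟩
    by_contra h
    push Not at h
    exact (valA_lt_value_of_trapped ρ E α hα (lt_of_le_of_ne hV.1.1 (Ne.symm h.1))
      (fun σ hσ => (h.2 σ hσ).imp fun b hb => hb.2) sA).ne hsA
  · rintro (hV0 | ⟨σ, hopt, hesc⟩)
    · exact ⟨Classical.arbitrary _, le_antisymm (valA_le_value _ _ 1 _ 0)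
        (hV0.le.trans (valA_mem_Icc _ _ 1 _ 0).1)⟩
    · refine ⟨ofPos fun _ => σ, le_antisymm (valA_le_value _ _ 1 _ 0)
        (le_of_forall_lt_imp_le_of_dense fun y hy => le_valA_ofPos ρ E α hα ?_)⟩
      exact lt_valStratGF_of_escapes ρ E α (hopt.trans (fval_value ρ E α hα)) hesc hy

/-- the initial state `q₀` of the three-state reachability game
`C_{(F,α)}` is maximizable if and only if the game form `F` is reach-maximizable
w.r.t. `α`. -/
theorem stmt8
    {A B O : Type} [Fintype A] [Fintype B] [Fintype O]
    [Nonempty A] [Nonempty B] [Nonempty O]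
    (ρ : A → B → O) (E : Set O) (α : O → ℝ)
    (hα : ∀ o ∉ E, α o ∈ Set.Icc (0:ℝ) 1) :
    CRG.Maximizable (CRG.triδ ρ E) (CRG.triDist E α hα) 1 0 ↔ CRG.RMwrt ρ E α :=
  stmt8_general ρ E α hα
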